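/- In the canonical-model semantics, if interpretation I canonically models P and cur ⊑ I strictly satisfies all non-fluent facts of P, then the interpretation cur' obtained from cur by replacing, at a time t outside the target time set of (v,L), the bound of L at v at time t with its bound at time t−1, still satisfies cur' ⊑ I. -/

import Mathlib

/-- Interpretations: time → component → label → bound. -/
def Interp (G L : Type) := ℕ → G → L → Set ℝ

/-- `J ⊑ I`: every bound in `I` is a subset of the corresponding bound in `J`. -/
def ile {G L : Type} (J I : Interp G L) : Prop :=
  ∀ t c lab, I t c lab ⊆ J t c lab

theorem canonical_bound_subset_prev {G L : Type} {TTS : G → L → Set ℕ} {I cur : Interp G L}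
    (hcanon : ∀ (c : G) (lab : L) (t : ℕ), t ∉ TTS c lab → 0 < t →
      I t c lab = I (t - 1) c lab)
    (hle : ile cur I) {c : G} {lab : L} {t : ℕ} (ht : t ∉ TTS c lab) (htpos : 0 < t) :
    I t c lab ⊆ cur (t - 1) c lab :=
  hcanon c lab t ht htpos ▸ hle (t - 1) c lab

/-- Claim 2: let `TTS` give the target time set of each pair
`(c,L)` (the same for all interpretations strictly satisfying the non-fluent
facts of `P`). Suppose `I` is canonical: for `t ∉ TTS(c,L)` with `t > 0`, the
bound of `L` at `c` at time `t` in `I` equals its bound at `t-1`. If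
`cur ⊑ I`, `t ∉ TTS(v,L₀)`, `t > 0`, and `cur'` is obtained from `cur` by
replacing the bound of `L₀` at `v` at time `t` with `cur`'s bound at `t-1`
(all other bounds unchanged), then `cur' ⊑ I`. -/
theorem canon_copy_step_preserves_le {G L : Type} [DecidableEq G] [DecidableEq L]
    (TTS : G → L → Set ℕ)
    (I cur cur' : Interp G L)
    (hcanon : ∀ (c : G) (lab : L) (t : ℕ), t ∉ TTS c lab → 0 < t →
      I t c lab = I (t - 1) c lab)
    (hle : ile cur I)
    (v : G) (L₀ : L) (t : ℕ) (ht : t ∉ TTS v L₀) (htpos : 0 < t)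
    (hcur' : ∀ (t' : ℕ) (c' : G) (lab' : L),
      cur' t' c' lab' =
        if t' = t ∧ c' = v ∧ lab' = L₀ then cur (t - 1) v L₀
        else cur t' c' lab') :
    ile cur' I := by
  intro t' c' lab'
  rw [hcur']
  split_ifs with h
  · obtain ⟨rfl, rfl, rfl⟩ := h
    exact canonical_bound_subset_prev hcanon hle ht htpos
  · exact hle t' c' lab'
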